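/- arXiv:2305.13063 — 6 statements merged into one kernel-verified Lean document; each statement's English description precedes it below -/
import Mathlib

section
/- Let H be a hierarchical partition of X and let P ⊆ H be a partition of X with |P| > 1. Then there exist pairwise disjoint segments S₁, …, Sₙ ∈ P with n ≥ 2 and a segment S' ∈ H such that each Sᵢ divides S', S₁ ∪ … ∪ Sₙ = S', and P' := (P \ {S₁,…,Sₙ}) ∪ {S'} is again a partition of X induced by H with |P'| < |P|. -/
/-- A hierarchical partition of a nonempty set `X`: either `{X}`, or the union of `{X}`
with hierarchical partitions of the parts of a partition of `X` into `n ≥ 2` nonempty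
pairwise disjoint parts. -/
inductive IsHierarchicalPartition {α : Type*} : Set (Set α) → Set α → Prop
  | base (X : Set α) (hX : X.Nonempty) : IsHierarchicalPartition {X} X
  | node (X : Set α) (n : ℕ) (hn : 2 ≤ n) (parts : Fin n → Set α)
      (Hs : Fin n → Set (Set α))
      (hne : ∀ i, (parts i).Nonempty)
      (hdisj : ∀ i j, i ≠ j → Disjoint (parts i) (parts j))
      (hunion : ⋃ i, parts i = X)
      (hrec : ∀ i, IsHierarchicalPartition (Hs i) (parts i)) :
      IsHierarchicalPartition ((⋃ i, Hs i) ∪ {X}) X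

/-- `S'` divides `S` in `H`: both are segments, `S' ⊂ S`, and no segment lies strictly between. -/
def Divides {α : Type*} (H : Set (Set α)) (S' S : Set α) : Prop :=
  S' ∈ H ∧ S ∈ H ∧ S' ⊂ S ∧ ¬∃ T ∈ H, S' ⊂ T ∧ T ⊂ S

/-- A segment is divisible if some segment divides it. -/
def Divisible {α : Type*} (H : Set (Set α)) (S : Set α) : Prop :=
  S ∈ H ∧ ∃ S', Divides H S' S

/-- A segment is indivisible if no segment divides it. -/
def Indivisible {α : Type*} (H : Set (Set α)) (S : Set α) : Prop :=
  S ∈ H ∧ ¬∃ S', Divides H S' S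

/-- `P` is a partition of `X`: nonempty, pairwise disjoint sets whose union is `X`. -/
def IsPartition {α : Type*} (P : Set (Set α)) (X : Set α) : Prop :=
  (∀ S ∈ P, S.Nonempty) ∧ P.PairwiseDisjoint id ∧ ⋃₀ P = X

lemma IHP_basic {α : Type*} {H : Set (Set α)} {X : Set α}
    (h : IsHierarchicalPartition H X) :
    X ∈ H ∧ ∀ S ∈ H, S ⊆ X ∧ S.Nonempty := by
  induction h with
  | base X hX => exact ⟨rfl, by rintro S rfl; exact ⟨subset_rfl, hX⟩⟩
  | node X n hn parts Hs hne hdisj hunion hrec ih =>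
    refine ⟨Or.inr rfl, ?_⟩
    rintro S (hS | rfl)
    · obtain ⟨i, hi⟩ := Set.mem_iUnion.mp hS
      obtain ⟨h1, h2⟩ := (ih i).2 S hi
      exact ⟨h1.trans (hunion ▸ Set.subset_iUnion parts i), h2⟩
    · refine ⟨subset_rfl, ?_⟩
      exact (hne ⟨0, by omega⟩).mono (hunion ▸ Set.subset_iUnion parts _)

/-- Any induced partition `P` of `X` with more than one element can be coarsened: there
are at least two segments of `P` dividing some `S' ∈ H` whose union is `S'`, and replacing
them by `S'` yields a strictly smaller induced partition of `X`. -/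
theorem induced_partition_coarsening {α : Type*} (H : Set (Set α)) (X : Set α)
    (hH : IsHierarchicalPartition H X) (P : Set (Set α)) (hPH : P ⊆ H)
    (hpart : IsPartition P X) (hfin : P.Finite) (hcard : 1 < P.ncard) :
    ∃ Q ⊆ P, ∃ S' ∈ H,
      (∃ A ∈ Q, ∃ B ∈ Q, A ≠ B) ∧
      (∀ S ∈ Q, Divides H S S') ∧
      ⋃₀ Q = S' ∧
      (P \ Q ∪ {S'}) ⊆ H ∧
      IsPartition (P \ Q ∪ {S'}) X ∧
      (P \ Q ∪ {S'}).ncard < P.ncard := by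
  revert P
  induction hH with
  | base X hX =>
    intro P hPH hpart hfin hcard
    have h1 : P.ncard ≤ 1 := by
      have := Set.ncard_le_ncard hPH (Set.finite_singleton X)
      simpa using this
    omega
  | node X n hn parts Hs hne hdisj hunion hrec ih =>
    intro P hPH hpart hfin hcard
    obtain ⟨hnonempty, hdisjP, hsU⟩ := hpart
    have subs : ∀ i, ∀ S ∈ Hs i, S ⊆ parts i ∧ S.Nonempty :=
      fun i => (IHP_basic (hrec i)).2
    -- X ∉ P
    have hXP : X ∉ P := by
      intro hX
      obtain ⟨A, B, hA, hB, hAB⟩ := (Set.one_lt_ncard_iff hfin).mp hcard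
      have key : ∀ S ∈ P, S ≠ X → False := by
        intro S hS hSX
        have hd : Disjoint S X := hdisjP hS hX hSX
        have hsub : S ⊆ X := hsU ▸ Set.subset_sUnion_of_mem hS
        obtain ⟨x, hx⟩ := hnonempty S hS
        exact Set.disjoint_left.mp hd hx (hsub hx)
      by_cases hA' : A = X
      · exact key B hB (fun h => hAB (hA'.trans h.symm))
      · exact key A hA hA'
    have hidx : ∀ S ∈ P, ∃ i, S ∈ Hs i := by
      intro S hS
      rcases hPH hS with h | h
      · exact Set.mem_iUnion.mp h
      · exact absurd (h ▸ hS) hXP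
    set Pi : Fin n → Set (Set α) := fun i => P ∩ Hs i with hPi
    have hPiU : ∀ i, ⋃₀ (Pi i) = parts i := by
      intro i
      apply subset_antisymm
      · exact Set.sUnion_subset fun S hS => (subs i S hS.2).1
      · intro x hx
        have hxX : x ∈ ⋃₀ P := hsU ▸ (hunion ▸ Set.subset_iUnion parts i) hx
        obtain ⟨S, hS, hxS⟩ := hxX
        obtain ⟨j, hj⟩ := hidx S hS
        have hxj : x ∈ parts j := (subs j S hj).1 hxS
        have hji : j = i := by
          by_contra hji
          exact Set.disjoint_left.mp (hdisj j i hji) hxj hx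
        exact ⟨S, ⟨hS, hji ▸ hj⟩, hxS⟩
    by_cases hbig : ∃ i, 1 < (Pi i).ncard
    · -- some part has a nontrivial induced partition: recurse
      obtain ⟨i, hi⟩ := hbig
      have hPi_part : IsPartition (Pi i) (parts i) :=
        ⟨fun S hS => hnonempty S hS.1, hdisjP.subset Set.inter_subset_left, hPiU i⟩
      obtain ⟨Q, hQPi, S', hS'Hsi, htwo, hdivQ, hUQ, -, -, -⟩ :=
        ih i (Pi i) Set.inter_subset_right hPi_part (hfin.subset Set.inter_subset_left) hi
      have hQP : Q ⊆ P := hQPi.trans Set.inter_subset_left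
      have hS'H : S' ∈ (⋃ i, Hs i) ∪ {X} := Or.inl (Set.mem_iUnion.mpr ⟨i, hS'Hsi⟩)
      obtain ⟨hS'sub, hS'ne⟩ := subs i S' hS'Hsi
      have hXsub : S' ⊆ X := hS'sub.trans (hunion ▸ Set.subset_iUnion parts i)
      refine ⟨Q, hQP, S', hS'H, htwo, ?_, hUQ, ?_, ?_, ?_⟩
      · -- divides lifts to the whole H
        intro S hS
        obtain ⟨h1, h2, h3, h4⟩ := hdivQ S hS
        refine ⟨Or.inl (Set.mem_iUnion.mpr ⟨i, h1⟩), Or.inl (Set.mem_iUnion.mpr ⟨i, h2⟩), h3, ?_⟩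
        rintro ⟨T, (hT | rfl), hST, hTS'⟩
        · obtain ⟨j, hj⟩ := Set.mem_iUnion.mp hT
          have hSsub : S ⊆ parts i := (subs i S h1).1
          obtain ⟨x, hx⟩ := hnonempty S (hQP hS)
          have hxj : x ∈ parts j := (subs j T hj).1 (hST.1 hx)
          have hji : j = i := by
            by_contra hji
            exact Set.disjoint_left.mp (hdisj j i hji) hxj (hSsub hx)
          exact h4 ⟨T, hji ▸ hj, hST, hTS'⟩
        · exact ssubset_irrefl _ (hTS'.trans_subset hXsub)
      · exact Set.union_subset ((Set.diff_subset).trans hPH) (by simpa using hS'H)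
      · -- the coarsened family is a partition
        have hS'notPQ : S' ∉ P \ Q := by
          rintro ⟨hS'P, hS'Q⟩
          obtain ⟨A, hA, -⟩ := htwo
          have hAne : A ≠ S' := fun h => hS'Q (h ▸ hA)
          have hd := hdisjP (hQP hA) hS'P hAne
          have hAsub : A ⊆ S' := hUQ ▸ Set.subset_sUnion_of_mem hA
          obtain ⟨x, hx⟩ := hnonempty A (hQP hA)
          exact Set.disjoint_left.mp hd hx (hAsub hx)
        refine ⟨?_, ?_, ?_⟩
        · rintro S (⟨hS, -⟩ | rfl)
          · exact hnonempty S hS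
          · exact hS'ne
        · have key : ∀ A ∈ P \ Q, Disjoint A S' := by
            intro A hA
            rw [← hUQ]
            refine Set.disjoint_sUnion_right.mpr fun C hC => ?_
            exact hdisjP hA.1 (hQP hC) (fun h => hA.2 (h ▸ hC))
          rintro A (hA | rfl) B (hB | rfl) hAB
          · exact hdisjP hA.1 hB.1 hAB
          · exact key A hA
          · exact (key B hB).symm
          · exact absurd rfl hAB
        · rw [Set.sUnion_union, Set.sUnion_singleton, ← hUQ, ← Set.sUnion_union,
            Set.diff_union_of_subset hQP, hsU]
      · -- cardinality drops
        have hQfin : Q.Finite := hfin.subset hQP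
        have hS'notPQ : S' ∉ P \ Q := by
          rintro ⟨hS'P, hS'Q⟩
          obtain ⟨A, hA, -⟩ := htwo
          have hAne : A ≠ S' := fun h => hS'Q (h ▸ hA)
          have hd := hdisjP (hQP hA) hS'P hAne
          have hAsub : A ⊆ S' := hUQ ▸ Set.subset_sUnion_of_mem hA
          obtain ⟨x, hx⟩ := hnonempty A (hQP hA)
          exact Set.disjoint_left.mp hd hx (hAsub hx)
        have h1 : (P \ Q ∪ {S'}).ncard = (P \ Q).ncard + 1 := by
          rw [Set.union_singleton, Set.ncard_insert_of_notMem hS'notPQ (hfin.diff (t := Q))]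
        have h2 : (P \ Q).ncard = P.ncard - Q.ncard := Set.ncard_diff hQP hQfin
        have h3 : 1 < Q.ncard := by
          obtain ⟨A, hA, B, hB, hAB⟩ := htwo
          exact (Set.one_lt_ncard_iff hQfin).mpr ⟨A, B, hA, hB, hAB⟩
        have h4 : Q.ncard ≤ P.ncard := Set.ncard_le_ncard hQP hfin
        omega
    · -- every part meets exactly one element of P, so P = {parts i} and we coarsen to {X}
      push_neg at hbig
      have hone : ∀ i, Pi i = {parts i} := by
        intro i
        have hne' : (Pi i).Nonempty := by
          obtain ⟨x, hx⟩ := hne i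
          have hx' : x ∈ ⋃₀ (Pi i) := (hPiU i) ▸ hx
          obtain ⟨S, hS, -⟩ := hx'
          exact ⟨S, hS⟩
        have hfin' : (Pi i).Finite := hfin.subset Set.inter_subset_left
        have hcard1 : (Pi i).ncard = 1 :=
          le_antisymm (hbig i) ((Set.ncard_pos hfin').mpr hne')
        obtain ⟨S, hSeq⟩ := Set.ncard_eq_one.mp hcard1
        have hSp : S = parts i := by
          rw [← hPiU i, hSeq, Set.sUnion_singleton]
        rw [hSeq, hSp]
      have hPmem : ∀ S ∈ P, ∃ i, S = parts i := by
        intro S hS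
        obtain ⟨i, hi⟩ := hidx S hS
        have : S ∈ Pi i := ⟨hS, hi⟩
        rw [hone i] at this
        exact ⟨i, this⟩
      have hXH : X ∈ (⋃ i, Hs i) ∪ {X} := Or.inr rfl
      haveI : Nontrivial (Fin n) := Fin.nontrivial_iff_two_le.mpr hn
      have htwoP := (Set.one_lt_ncard_iff hfin).mp hcard
      refine ⟨P, subset_rfl, X, hXH, ?_, ?_, hsU, ?_, ?_, ?_⟩
      · obtain ⟨A, B, hA, hB, hAB⟩ := htwoP
        exact ⟨A, hA, B, hB, hAB⟩
      · intro S hS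
        obtain ⟨i, rfl⟩ := hPmem S hS
        obtain ⟨j, hj⟩ := exists_ne i
        refine ⟨hPH hS, hXH, ?_, ?_⟩
        · rw [Set.ssubset_iff_subset_ne]
          refine ⟨hunion ▸ Set.subset_iUnion parts i, ?_⟩
          intro hPX
          obtain ⟨x, hx⟩ := hne j
          have hxi : x ∈ parts i := by
            rw [hPX]; exact (hunion ▸ Set.subset_iUnion parts j) hx
          exact Set.disjoint_left.mp (hdisj j i hj) hx hxi
        · rintro ⟨T, (hT | rfl), hPT, hTX⟩
          · obtain ⟨j', hj'⟩ := Set.mem_iUnion.mp hT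
            have hTsub := (subs j' T hj').1
            have hij : j' = i := by
              by_contra hji
              obtain ⟨x, hx⟩ := hne i
              exact Set.disjoint_left.mp (hdisj j' i hji) (hTsub (hPT.1 hx)) hx
            exact hPT.2 (hij ▸ hTsub)
          · exact ssubset_irrefl _ hTX
      · rw [Set.diff_self, Set.empty_union]
        simp
      · rw [Set.diff_self, Set.empty_union]
        refine ⟨?_, ?_, Set.sUnion_singleton X⟩
        · rintro S rfl
          exact (hne ⟨0, by omega⟩).mono (hunion ▸ Set.subset_iUnion parts _)
        · exact Set.pairwiseDisjoint_singleton X id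
      · rw [Set.diff_self, Set.empty_union, Set.ncard_singleton]
        exact hcard
end

section
/- Consider the Switching algorithm with m experts: weights β_0^j = 1/m and update β_t^j = (1-α_t)β_{t-1}^j e^{-η ℓ_t^j} + (α_t/(m-1))·∑_{u ≠ j} β_{t-1}^u e^{-η ℓ_t^u}, where ℓ_t^j ∈ ℝ are expert losses and α_t ∈ (0,1). Then for all t ≥ 0 and all j, β_t^j = ∑_{i₁…i_{t+1} : i_{t+1}=j} w(i₁…i_{t+1}) · exp(-η ∑_{s=1}^{t} ℓ_s^{i_s}), where w is the switching prior. -/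
/-- The switching prior over sequences `i₁ … i_T` from `Fin m` (represented as
`i : Fin T → Fin m`, with `i ⟨t-1,_⟩ = i_t`): `w(ε) = 1`, `w(i₁) = 1/m`, and
`w(i₁…i_t) = w(i₁…i_{t-1}) · (1 - α_{t-1})` if `i_t = i_{t-1}`,
`w(i₁…i_t) = w(i₁…i_{t-1}) · α_{t-1}/(m-1)` otherwise. -/
noncomputable def switchPrior (m : ℕ) (α : ℕ → ℝ) : (T : ℕ) → (Fin T → Fin m) → ℝ
  | 0, _ => 1
  | 1, _ => 1 / (m : ℝ)
  | (T + 2), i =>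
      switchPrior m α (T + 1) (fun s => i s.castSucc) *
        (if i (Fin.last (T + 1)) = i ((Fin.last T).castSucc) then 1 - α (T + 1)
         else α (T + 1) / ((m : ℝ) - 1))

/-- The Switching weights are expectations: `β_t^j` equals the sum over all switching
sequences of length `t+1` ending in `j` of the prior times the exponentiated loss. -/
theorem switching_beta_eq_expectation (m : ℕ) (hm : 2 ≤ m) (η : ℝ) (hη : 0 < η)
    (α : ℕ → ℝ) (hα : ∀ t, 1 ≤ t → α t ∈ Set.Ioo (0 : ℝ) 1)
    (ℓ : ℕ → Fin m → ℝ) (β : ℕ → Fin m → ℝ)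
    (hβ0 : ∀ j, β 0 j = 1 / (m : ℝ))
    (hβ : ∀ t, 1 ≤ t → ∀ j, β t j =
      (1 - α t) * β (t - 1) j * Real.exp (-η * ℓ t j)
        + (α t / ((m : ℝ) - 1)) *
            ∑ u ∈ Finset.univ.erase j, β (t - 1) u * Real.exp (-η * ℓ t u)) :
    ∀ t (j : Fin m), β t j =
      ∑ i : Fin (t + 1) → Fin m,
        if i (Fin.last t) = j then
          switchPrior m α (t + 1) i *
            Real.exp (-η * ∑ s : Fin t, ℓ (s.1 + 1) (i s.castSucc))
        else 0 := by
  intro t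
  induction t with
  | zero =>
    intro j
    rw [hβ0, ← Equiv.sum_comp (Equiv.funUnique (Fin 1) (Fin m)).symm]
    simp [switchPrior, Equiv.funUnique, Finset.sum_ite_eq']
  | succ t ih =>
    intro j
    have hP : ∀ u : Fin m, β t u = ∑ i : Fin (t + 1) → Fin m,
        if i (Fin.last t) = u then
          switchPrior m α (t + 1) i *
            Real.exp (-η * ∑ s : Fin t, ℓ (s.1 + 1) (i s.castSucc))
        else 0 := ih
    set P : (Fin (t + 1) → Fin m) → ℝ := fun i =>
      switchPrior m α (t + 1) i *
        Real.exp (-η * ∑ s : Fin t, ℓ (s.1 + 1) (i s.castSucc)) with hPdef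
    set C : Fin m → ℝ := fun u =>
      (if j = u then 1 - α (t + 1) else α (t + 1) / ((m : ℝ) - 1)) *
        Real.exp (-η * ℓ (t + 1) u) with hCdef
    -- step 1: collapse the last coordinate
    have e1 : (∑ i : Fin (t + 1 + 1) → Fin m,
        if i (Fin.last (t + 1)) = j then
          switchPrior m α (t + 1 + 1) i *
            Real.exp (-η * ∑ s : Fin (t + 1), ℓ (s.1 + 1) (i s.castSucc))
        else 0)
      = ∑ i : Fin (t + 1) → Fin m,
          switchPrior m α (t + 2) (Fin.snoc i j) *
            Real.exp (-η * ∑ s : Fin (t + 1),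
              ℓ (s.1 + 1) ((Fin.snoc i j : Fin (t + 2) → Fin m) s.castSucc)) := by
      rw [← Equiv.sum_comp (Fin.snocEquiv (fun _ => Fin m)), Fintype.sum_prod_type]
      simp only [Fin.snocEquiv, Equiv.coe_fn_mk]
      have key : ∀ k : Fin m, (∑ i : Fin (t + 1) → Fin m,
          if (Fin.snoc i k : Fin (t + 2) → Fin m) (Fin.last (t + 1)) = j then
            switchPrior m α (t + 1 + 1) (Fin.snoc i k) *
              Real.exp (-η * ∑ s : Fin (t + 1),
                ℓ (s.1 + 1) ((Fin.snoc i k : Fin (t + 2) → Fin m) s.castSucc))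
          else 0)
        = if k = j then (∑ i : Fin (t + 1) → Fin m,
            switchPrior m α (t + 2) (Fin.snoc i j) *
              Real.exp (-η * ∑ s : Fin (t + 1),
                ℓ (s.1 + 1) ((Fin.snoc i j : Fin (t + 2) → Fin m) s.castSucc))) else 0 := by
        intro k
        by_cases hk : k = j
        · subst hk; simp [Fin.snoc_last]
        · simp [Fin.snoc_last, hk]
      refine Eq.trans (Finset.sum_congr rfl fun k _ => key k) ?_
      rw [Finset.sum_ite_eq' Finset.univ j]
      simp
    -- step 2: evaluate the summand
    have e2 : ∀ i : Fin (t + 1) → Fin m,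
        switchPrior m α (t + 2) (Fin.snoc i j) *
          Real.exp (-η * ∑ s : Fin (t + 1),
            ℓ (s.1 + 1) ((Fin.snoc i j : Fin (t + 2) → Fin m) s.castSucc))
        = C (i (Fin.last t)) * P i := by
      intro i
      have hinit : (fun s : Fin (t + 1) => (Fin.snoc i j : Fin (t + 2) → Fin m) s.castSucc) = i := by
        funext s; simp
      have hsum : (∑ s : Fin (t + 1),
            ℓ (s.1 + 1) ((Fin.snoc i j : Fin (t + 2) → Fin m) s.castSucc))
          = (∑ s : Fin t, ℓ (s.1 + 1) (i s.castSucc)) + ℓ (t + 1) (i (Fin.last t)) := by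
        rw [show (∑ s : Fin (t + 1),
              ℓ (s.1 + 1) ((Fin.snoc i j : Fin (t + 2) → Fin m) s.castSucc))
            = ∑ s : Fin (t + 1), ℓ (s.1 + 1) (i s) from
          Finset.sum_congr rfl fun s _ => by rw [Fin.snoc_castSucc]]
        rw [Fin.sum_univ_castSucc]
        simp [Fin.last]
      rw [hsum, show switchPrior m α (t + 2) (Fin.snoc i j)
          = switchPrior m α (t + 1)
              (fun s => (Fin.snoc i j : Fin (t + 2) → Fin m) s.castSucc) *
            (if (Fin.snoc i j : Fin (t + 2) → Fin m) (Fin.last (t + 1))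
                = (Fin.snoc i j : Fin (t + 2) → Fin m) ((Fin.last t).castSucc)
             then 1 - α (t + 1) else α (t + 1) / ((m : ℝ) - 1)) from rfl,
        hinit, Fin.snoc_last, Fin.snoc_castSucc, mul_add, Real.exp_add, hPdef, hCdef]
      ring
    -- step 3: group by the last index of the shorter sequence
    have e3 : (∑ i : Fin (t + 1) → Fin m, C (i (Fin.last t)) * P i)
        = ∑ u : Fin m, C u * ∑ i : Fin (t + 1) → Fin m,
            (if i (Fin.last t) = u then P i else 0) := by
      have h1 : ∀ i : Fin (t + 1) → Fin m,
          C (i (Fin.last t)) * P i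
            = ∑ u : Fin m, if i (Fin.last t) = u then C u * P i else 0 := by
        intro i
        rw [Finset.sum_ite_eq]
        simp
      rw [Finset.sum_congr rfl fun i _ => h1 i, Finset.sum_comm]
      refine Finset.sum_congr rfl fun u _ => ?_
      rw [Finset.mul_sum]
      exact Finset.sum_congr rfl fun i _ => by split <;> simp
    have e4 : ∀ u : Fin m,
        (∑ i : Fin (t + 1) → Fin m, if i (Fin.last t) = u then P i else 0) = β t u :=
      fun u => (hP u).symm
    rw [e1, Finset.sum_congr rfl fun i _ => e2 i, e3,
      Finset.sum_congr rfl fun u _ => by rw [e4 u]]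
    rw [hβ (t + 1) (by omega) j]
    simp only [Nat.add_sub_cancel]
    rw [← Finset.add_sum_erase _ _ (Finset.mem_univ j)]
    congr 1
    · simp only [hCdef, if_true]
      ring
    · rw [Finset.mul_sum]
      refine Finset.sum_congr rfl fun u hu => ?_
      simp only [hCdef]
      rw [if_neg (fun h => (Finset.ne_of_mem_erase hu) h.symm)]
      ring
end

section
/- Consider the Switching algorithm: weights β as in the standard update, prediction y_t = (∑_j β_{t-1}^j y_t^j)/(∑_j β_{t-1}^j) where y_t^j are expert predictions, loss functions ℓ_t that are η-exp-concave, and total loss L_t = ∑_{s ≤ t} ℓ_s(y_s). Then the quantity φ_t = ∑_{j=1}^m β_t^j · e^{η L_t} is non-increasing in t. -/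
/-- Monotonicity invariant of Switching: with `η`-exp-concave losses, the potential
`φ_t = ∑_j β_t^j · e^{η L_t}` is non-increasing in `t`. -/
theorem switching_potential_decreasing (m d : ℕ) (hm : 2 ≤ m) (η : ℝ) (hη : 0 < η)
    (Y : Set (Fin d → ℝ)) (hY : Convex ℝ Y)
    (ℓ : ℕ → (Fin d → ℝ) → ℝ)
    (hℓ : ∀ t, 1 ≤ t → ConcaveOn ℝ Y fun z => Real.exp (-η * ℓ t z))
    (ypred : ℕ → Fin m → (Fin d → ℝ)) (hypred : ∀ t j, ypred t j ∈ Y)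
    (α : ℕ → ℝ) (hα : ∀ t, 1 ≤ t → α t ∈ Set.Icc (0 : ℝ) 1)
    (β : ℕ → Fin m → ℝ) (hβ0 : ∀ j, β 0 j = 1 / (m : ℝ))
    (hβ : ∀ t, 1 ≤ t → ∀ j, β t j =
      (1 - α t) * β (t - 1) j * Real.exp (-η * ℓ t (ypred t j))
        + (α t / ((m : ℝ) - 1)) *
            ∑ u ∈ Finset.univ.erase j, β (t - 1) u * Real.exp (-η * ℓ t (ypred t u)))
    (y : ℕ → (Fin d → ℝ))
    (hy : ∀ t, 1 ≤ t → y t = (∑ j, β (t - 1) j)⁻¹ • ∑ j, β (t - 1) j • ypred t j)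
    (L : ℕ → ℝ) (hL : ∀ t, L t = ∑ s ∈ Finset.Icc 1 t, ℓ s (y s)) :
    ∀ t, 1 ≤ t →
      (∑ j, β t j) * Real.exp (η * L t) ≤ (∑ j, β (t - 1) j) * Real.exp (η * L (t - 1)) := by
  have hmR : (2:ℝ) ≤ (m:ℝ) := by exact_mod_cast hm
  have hne : ((m:ℝ) - 1) ≠ 0 := by linarith
  have hnn : ∀ t j, 0 ≤ β t j := by
    intro t
    induction t with
    | zero => intro j; rw [hβ0]; positivity
    | succ n ih =>
      intro j
      rw [hβ (n+1) (Nat.le_add_left 1 n)]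
      simp only [Nat.add_sub_cancel]
      have hα' := hα (n+1) (Nat.le_add_left 1 n)
      have h1 : 0 ≤ 1 - α (n+1) := by linarith [hα'.2]
      apply add_nonneg
      · exact mul_nonneg (mul_nonneg h1 (ih j)) (Real.exp_pos _).le
      · exact mul_nonneg (div_nonneg hα'.1 (by linarith))
          (Finset.sum_nonneg fun u _ => mul_nonneg (ih u) (Real.exp_pos _).le)
  have hkey : ∀ t, 1 ≤ t →
      (∑ j, β t j) = ∑ j, β (t-1) j * Real.exp (-η * ℓ t (ypred t j)) := by
    intro t ht
    set S' := ∑ j, β (t-1) j * Real.exp (-η * ℓ t (ypred t j)) with hS'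
    calc (∑ j, β t j)
        = ∑ j : Fin m, ((1 - α t) * β (t-1) j * Real.exp (-η * ℓ t (ypred t j))
            + (α t / ((m:ℝ)-1)) * (S' - β (t-1) j * Real.exp (-η * ℓ t (ypred t j)))) := by
          refine Finset.sum_congr rfl fun j _ => ?_
          rw [hβ t ht j, Finset.sum_erase_eq_sub (Finset.mem_univ j)]
      _ = (1 - α t) * S' + (α t / ((m:ℝ)-1)) * ((m:ℝ) * S' - S') := by
          simp only [Finset.sum_add_distrib, mul_assoc, ← Finset.mul_sum,
            Finset.sum_sub_distrib, Finset.sum_const, Finset.card_univ,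
            Fintype.card_fin, nsmul_eq_mul]
          rfl
      _ = S' := by field_simp; ring
  have hpos : ∀ t, 0 < ∑ j, β t j := by
    intro t
    induction t with
    | zero =>
      simp only [hβ0, Finset.sum_const, Finset.card_univ, Fintype.card_fin, nsmul_eq_mul]
      rw [mul_one_div, div_self (by positivity)]
      norm_num
    | succ n ih =>
      rw [hkey (n+1) (Nat.le_add_left 1 n)]
      simp only [Nat.add_sub_cancel]
      obtain ⟨j, hj⟩ : ∃ j, 0 < β n j := by
        by_contra h
        push_neg at h
        exact absurd ih (not_lt.2 (Finset.sum_nonpos fun j _ => h j))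
      exact Finset.sum_pos' (fun u _ => mul_nonneg (hnn n u) (Real.exp_pos _).le)
        ⟨j, Finset.mem_univ j, mul_pos hj (Real.exp_pos _)⟩
  intro t ht
  have hLt : L t = L (t-1) + ℓ t (y t) := by
    obtain ⟨n, rfl⟩ : ∃ n, t = n + 1 := ⟨t-1, (Nat.succ_pred_eq_of_pos ht).symm⟩
    rw [hL, hL, Nat.add_sub_cancel, Finset.sum_Icc_succ_top (by omega)]
  set S := ∑ j, β (t-1) j with hSdef
  have hSpos : 0 < S := hpos (t-1)
  have hw1 : ∑ j, β (t-1) j / S = 1 := by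
    rw [← Finset.sum_div, ← hSdef, div_self hSpos.ne']
  have hcomb : y t = ∑ j, (β (t-1) j / S) • ypred t j := by
    rw [hy t ht]
    rw [Finset.smul_sum]
    refine Finset.sum_congr rfl fun j _ => ?_
    rw [smul_smul, div_eq_inv_mul]
  have hexp := (hℓ t ht).le_map_sum (t := Finset.univ)
    (fun j _ => div_nonneg (hnn _ j) hSpos.le) hw1 (fun j _ => hypred t j)
  rw [← hcomb] at hexp
  have hsum_le : ∑ j, β (t-1) j * Real.exp (-η * ℓ t (ypred t j))
      ≤ S * Real.exp (-η * ℓ t (y t)) := by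
    have h2 := mul_le_mul_of_nonneg_left hexp hSpos.le
    calc ∑ j, β (t-1) j * Real.exp (-η * ℓ t (ypred t j))
        = S * ∑ j, (β (t-1) j / S) • Real.exp (-η * ℓ t (ypred t j)) := by
          rw [Finset.mul_sum]
          refine Finset.sum_congr rfl fun j _ => ?_
          rw [smul_eq_mul]
          field_simp
      _ ≤ S * Real.exp (-η * ℓ t (y t)) := h2
  rw [hkey t ht, hLt, mul_add, Real.exp_add]
  have hcancel : Real.exp (-η * ℓ t (y t)) * Real.exp (η * ℓ t (y t)) = 1 := by
    rw [← Real.exp_add]; ring_nf; exact Real.exp_zero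
  calc (∑ j, β (t-1) j * Real.exp (-η * ℓ t (ypred t j)))
        * (Real.exp (η * L (t-1)) * Real.exp (η * ℓ t (y t)))
      ≤ (S * Real.exp (-η * ℓ t (y t)))
        * (Real.exp (η * L (t-1)) * Real.exp (η * ℓ t (y t))) := by
        apply mul_le_mul_of_nonneg_right hsum_le
        positivity
    _ = S * Real.exp (η * L (t-1)) := by
        rw [show (S * Real.exp (-η * ℓ t (y t)))
            * (Real.exp (η * L (t-1)) * Real.exp (η * ℓ t (y t)))
            = S * Real.exp (η * L (t-1))
              * (Real.exp (-η * ℓ t (y t)) * Real.exp (η * ℓ t (y t))) by ring,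
          hcancel, mul_one]
end

section
/- Switching regret bound: Let L_T^SW = ∑_{t=1}^T ℓ_t(y_t) be the total loss of the Switching algorithm with m experts, η-exp-concave losses ℓ_t, and switching rates α_t ∈ (0,1). For any switching sequence i₁…i_T over {1,…,m} with switch set T_set = {1 ≤ t < T : i_t ≠ i_{t+1}}, we have L_T^SW ≤ ∑_{t=1}^T ℓ_t(y_t^{i_t}) + (1/η)[log m + |T_set|·log(m-1) + ∑_{t ∈ T_set} log(1/α_t) + ∑_{t ∉ T_set, 1 ≤ t < T} log(1/(1-α_t))]. -/
/-- Switching regret bound: the total loss of the Switching algorithm is bounded by the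
loss of any switching sequence `i₁ … i_T` plus
`(1/η)[log m + |Tset| log(m-1) + ∑_{t ∈ Tset} log(1/α_t) + ∑_{t ∉ Tset, 1 ≤ t < T} log(1/(1-α_t))]`,
where `Tset = {1 ≤ t < T : i_t ≠ i_{t+1}}`. -/
theorem switching_regret_bound (m d : ℕ) (hm : 2 ≤ m) (η : ℝ) (hη : 0 < η)
    (Y : Set (Fin d → ℝ)) (hY : Convex ℝ Y)
    (ℓ : ℕ → (Fin d → ℝ) → ℝ)
    (hℓ : ∀ t, 1 ≤ t → ConcaveOn ℝ Y fun z => Real.exp (-η * ℓ t z))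
    (ypred : ℕ → Fin m → (Fin d → ℝ)) (hypred : ∀ t j, ypred t j ∈ Y)
    (α : ℕ → ℝ) (hα : ∀ t, 1 ≤ t → α t ∈ Set.Ioo (0 : ℝ) 1)
    (β : ℕ → Fin m → ℝ) (hβ0 : ∀ j, β 0 j = 1 / (m : ℝ))
    (hβ : ∀ t, 1 ≤ t → ∀ j, β t j =
      (1 - α t) * β (t - 1) j * Real.exp (-η * ℓ t (ypred t j))
        + (α t / ((m : ℝ) - 1)) *
            ∑ u ∈ Finset.univ.erase j, β (t - 1) u * Real.exp (-η * ℓ t (ypred t u)))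
    (y : ℕ → (Fin d → ℝ))
    (hy : ∀ t, 1 ≤ t → y t = (∑ j, β (t - 1) j)⁻¹ • ∑ j, β (t - 1) j • ypred t j)
    (L : ℕ → ℝ) (hL : ∀ t, L t = ∑ s ∈ Finset.Icc 1 t, ℓ s (y s))
    (T : ℕ) (hT : 1 ≤ T) (i : ℕ → Fin m)
    (Tset : Finset ℕ)
    (hTset : Tset = (Finset.Icc 1 (T - 1)).filter fun t => i t ≠ i (t + 1)) :
    L T ≤ (∑ t ∈ Finset.Icc 1 T, ℓ t (ypred t (i t))) +
      (1 / η) * (Real.log m + Tset.card * Real.log ((m : ℝ) - 1)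
        + (∑ t ∈ Tset, Real.log (1 / α t))
        + ∑ t ∈ Finset.Icc 1 (T - 1) \ Tset, Real.log (1 / (1 - α t))) := by
  have hm1 : (1 : ℝ) ≤ (m : ℝ) - 1 := by
    have : (2 : ℝ) ≤ (m : ℝ) := by exact_mod_cast hm
    linarith
  have hm0 : (0 : ℝ) < (m : ℝ) := by linarith
  have hm1' : ((m : ℝ) - 1) ≠ 0 := by linarith
  -- positivity of weights
  have hβpos : ∀ t j, 0 < β t j := by
    intro t
    induction t with
    | zero => intro j; rw [hβ0]; positivity
    | succ t ih =>
      intro j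
      have hαt := hα (t + 1) (by omega)
      rw [hβ (t + 1) (by omega) j]
      simp only [Nat.add_sub_cancel]
      have h1 : 0 < (1 - α (t + 1)) * β t j * Real.exp (-η * ℓ (t + 1) (ypred (t + 1) j)) := by
        have ha : 0 < 1 - α (t + 1) := by linarith [hαt.2]
        have hb := ih j
        positivity
      have h2 : 0 ≤ (α (t + 1) / ((m : ℝ) - 1)) *
          ∑ u ∈ Finset.univ.erase j, β t u * Real.exp (-η * ℓ (t + 1) (ypred (t + 1) u)) := by
        apply mul_nonneg (by have := hαt.1; positivity)
        apply Finset.sum_nonneg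
        intro u _
        have := ih u; positivity
      linarith
  set W : ℕ → ℝ := fun t => ∑ j, β t j with hWdef
  have hWpos : ∀ t, 0 < W t :=
    fun t => Finset.sum_pos (fun j _ => hβpos t j) ⟨i 0, Finset.mem_univ _⟩
  -- recursion for W
  have hWrec : ∀ t, 1 ≤ t → W t = ∑ j, β (t - 1) j * Real.exp (-η * ℓ t (ypred t j)) := by
    intro t ht
    set f : Fin m → ℝ := fun j => β (t - 1) j * Real.exp (-η * ℓ t (ypred t j)) with hf
    have h0 : W t = ∑ j, ((1 - α t) * f j + (α t / ((m : ℝ) - 1)) * ∑ u ∈ Finset.univ.erase j, f u) := by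
      refine Finset.sum_congr rfl fun j _ => ?_
      rw [hβ t ht j]
      simp only [hf]
      ring
    have h2 : ∑ j : Fin m, ∑ u ∈ Finset.univ.erase j, f u = ((m : ℝ) - 1) * ∑ u, f u := by
      have he : ∀ j : Fin m, ∑ u ∈ Finset.univ.erase j, f u = (∑ u, f u) - f j :=
        fun j => Finset.sum_erase_eq_sub (Finset.mem_univ j)
      rw [Finset.sum_congr rfl (fun j _ => he j), Finset.sum_sub_distrib, Finset.sum_const,
        Finset.card_univ, Fintype.card_fin, nsmul_eq_mul]
      ring
    calc W t = ∑ j, ((1 - α t) * f j + (α t / ((m : ℝ) - 1)) * ∑ u ∈ Finset.univ.erase j, f u) := h0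
      _ = (1 - α t) * (∑ j, f j) + (α t / ((m : ℝ) - 1)) * (((m : ℝ) - 1) * ∑ u, f u) := by
          rw [Finset.sum_add_distrib, ← Finset.mul_sum, ← Finset.mul_sum, h2]
      _ = ∑ j, f j := by field_simp; ring
  -- upper bound step (Jensen)
  have hstep : ∀ t, 1 ≤ t → W t ≤ W (t - 1) * Real.exp (-η * ℓ t (y t)) := by
    intro t ht
    have hW := hWpos (t - 1)
    set w : Fin m → ℝ := fun j => β (t - 1) j / W (t - 1) with hw
    have hw0 : ∀ j ∈ Finset.univ, 0 ≤ w j := fun j _ => le_of_lt (div_pos (hβpos _ j) hW)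
    have hw1 : ∑ j, w j = 1 := by
      simp only [hw]; rw [← Finset.sum_div]; exact div_self (ne_of_gt hW)
    have hjensen := (hℓ t ht).le_map_sum hw0 hw1 (fun j _ => hypred t j)
    have hyeq : y t = ∑ j, w j • ypred t j := by
      rw [hy t ht, Finset.smul_sum]
      exact Finset.sum_congr rfl fun j _ => by
        rw [smul_smul, hw]
        congr 1
        field_simp
        exact mul_div_cancel_right₀ _ (ne_of_gt hW)
    rw [hWrec t ht]
    have hkey : ∑ j, w j • Real.exp (-η * ℓ t (ypred t j)) ≤ Real.exp (-η * ℓ t (y t)) := by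
      rw [hyeq]; exact hjensen
    calc ∑ j, β (t - 1) j * Real.exp (-η * ℓ t (ypred t j))
        = W (t - 1) * ∑ j, w j • Real.exp (-η * ℓ t (ypred t j)) := by
          rw [Finset.mul_sum]
          exact Finset.sum_congr rfl fun j _ => by
            simp only [smul_eq_mul, hw]; field_simp
      _ ≤ W (t - 1) * Real.exp (-η * ℓ t (y t)) :=
          mul_le_mul_of_nonneg_left hkey (le_of_lt hW)
  have hW0 : W 0 = 1 := by
    simp only [hWdef, hβ0, Finset.sum_const, Finset.card_univ, Fintype.card_fin, nsmul_eq_mul]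
    field_simp
  -- upper bound: W T ≤ exp(-η L T)
  have hupper : ∀ t, W t ≤ Real.exp (-η * ∑ s ∈ Finset.Icc 1 t, ℓ s (y s)) := by
    intro t
    induction t with
    | zero => simp [hW0]
    | succ t ih =>
      have h1 := hstep (t + 1) (by omega)
      simp only [Nat.add_sub_cancel] at h1
      calc W (t + 1) ≤ W t * Real.exp (-η * ℓ (t + 1) (y (t + 1))) := h1
        _ ≤ Real.exp (-η * ∑ s ∈ Finset.Icc 1 t, ℓ s (y s))
              * Real.exp (-η * ℓ (t + 1) (y (t + 1))) :=
            mul_le_mul_of_nonneg_right ih (Real.exp_nonneg _)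
        _ = Real.exp (-η * ∑ s ∈ Finset.Icc 1 (t + 1), ℓ s (y s)) := by
            rw [← Real.exp_add, Finset.sum_Icc_succ_top (by omega : 1 ≤ t + 1)]
            ring_nf
  -- switch factor
  set c : ℕ → ℝ := fun t => if i t = i (t + 1) then 1 - α t else α t / ((m : ℝ) - 1) with hc
  have hcpos : ∀ t, 1 ≤ t → 0 < c t := by
    intro t ht
    have hαt := hα t ht
    simp only [hc]
    split
    · linarith [hαt.2]
    · exact div_pos hαt.1 (by linarith)
  -- lower bound on tracked weight
  have hlower : ∀ t,
      (1 / (m : ℝ)) * ∏ s ∈ Finset.Icc 1 t, (c s * Real.exp (-η * ℓ s (ypred s (i s))))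
      ≤ β t (i (t + 1)) := by
    intro t
    induction t with
    | zero => simp [hβ0]
    | succ t ih =>
      have hαt := hα (t + 1) (by omega)
      have hct := hcpos (t + 1) (by omega)
      rw [Finset.prod_Icc_succ_top (by omega : 1 ≤ t + 1), ← mul_assoc]
      have key : c (t + 1) * Real.exp (-η * ℓ (t + 1) (ypred (t + 1) (i (t + 1)))) * β t (i (t + 1))
          ≤ β (t + 1) (i (t + 1 + 1)) := by
        rw [hβ (t + 1) (by omega), Nat.add_sub_cancel]
        by_cases h : i (t + 1) = i (t + 1 + 1)
        · have hc1 : c (t + 1) = 1 - α (t + 1) := by simp [hc, h]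
          have h2 : 0 ≤ (α (t + 1) / ((m : ℝ) - 1)) *
              ∑ u ∈ Finset.univ.erase (i (t + 1 + 1)),
                β t u * Real.exp (-η * ℓ (t + 1) (ypred (t + 1) u)) := by
            apply mul_nonneg (div_nonneg (le_of_lt hαt.1) (by linarith))
            exact Finset.sum_nonneg fun u _ => le_of_lt (by have := hβpos t u; positivity)
          rw [hc1, ← h]
          have h2' : 0 ≤ (α (t + 1) / ((m : ℝ) - 1)) *
              ∑ u ∈ Finset.univ.erase (i (t + 1)),
                β t u * Real.exp (-η * ℓ (t + 1) (ypred (t + 1) u)) := by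
            apply mul_nonneg (div_nonneg (le_of_lt hαt.1) (by linarith))
            exact Finset.sum_nonneg fun u _ => le_of_lt (by have := hβpos t u; positivity)
          have heq : (1 - α (t + 1)) * Real.exp (-η * ℓ (t + 1) (ypred (t + 1) (i (t + 1))))
              * β t (i (t + 1))
              = (1 - α (t + 1)) * β t (i (t + 1))
                * Real.exp (-η * ℓ (t + 1) (ypred (t + 1) (i (t + 1)))) := by ring
          linarith
        · have hc1 : c (t + 1) = α (t + 1) / ((m : ℝ) - 1) := by simp [hc, h]
          have h1 : 0 ≤ (1 - α (t + 1)) * β t (i (t + 1 + 1))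
              * Real.exp (-η * ℓ (t + 1) (ypred (t + 1) (i (t + 1 + 1)))) := by
            have ha : (0:ℝ) ≤ 1 - α (t + 1) := by linarith [hαt.2]
            have hb := hβpos t (i (t + 1 + 1))
            positivity
          have hmem : i (t + 1) ∈ Finset.univ.erase (i (t + 1 + 1)) :=
            Finset.mem_erase.2 ⟨h, Finset.mem_univ _⟩
          have hsum : β t (i (t + 1)) * Real.exp (-η * ℓ (t + 1) (ypred (t + 1) (i (t + 1))))
              ≤ ∑ u ∈ Finset.univ.erase (i (t + 1 + 1)),
                  β t u * Real.exp (-η * ℓ (t + 1) (ypred (t + 1) u)) :=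
            Finset.single_le_sum
              (f := fun u => β t u * Real.exp (-η * ℓ (t + 1) (ypred (t + 1) u)))
              (fun u _ => le_of_lt (by have := hβpos t u; positivity)) hmem
          rw [hc1]
          have hpos : 0 < α (t + 1) / ((m : ℝ) - 1) := div_pos hαt.1 (by linarith)
          have hmul := mul_le_mul_of_nonneg_left hsum (le_of_lt hpos)
          have heq : α (t + 1) / ((m : ℝ) - 1)
              * Real.exp (-η * ℓ (t + 1) (ypred (t + 1) (i (t + 1)))) * β t (i (t + 1))
              = α (t + 1) / ((m : ℝ) - 1) * (β t (i (t + 1))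
                * Real.exp (-η * ℓ (t + 1) (ypred (t + 1) (i (t + 1))))) := by ring
          linarith
      calc (1 / (m : ℝ)) * (∏ s ∈ Finset.Icc 1 t, (c s * Real.exp (-η * ℓ s (ypred s (i s)))))
            * (c (t + 1) * Real.exp (-η * ℓ (t + 1) (ypred (t + 1) (i (t + 1)))))
          ≤ β t (i (t + 1)) * (c (t + 1) * Real.exp (-η * ℓ (t + 1) (ypred (t + 1) (i (t + 1))))) := by
            apply mul_le_mul_of_nonneg_right ih
            positivity
        _ = c (t + 1) * Real.exp (-η * ℓ (t + 1) (ypred (t + 1) (i (t + 1)))) * β t (i (t + 1)) := by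
            ring
        _ ≤ β (t + 1) (i (t + 1 + 1)) := key
  -- lower bound on W T
  have hWT : (1 / (m : ℝ)) * (∏ s ∈ Finset.Icc 1 (T - 1), (c s * Real.exp (-η * ℓ s (ypred s (i s)))))
      * Real.exp (-η * ℓ T (ypred T (i T))) ≤ W T := by
    have h1 := hlower (T - 1)
    have hT1 : T - 1 + 1 = T := by omega
    rw [hT1] at h1
    rw [hWrec T hT]
    calc (1 / (m : ℝ)) * (∏ s ∈ Finset.Icc 1 (T - 1), (c s * Real.exp (-η * ℓ s (ypred s (i s)))))
        * Real.exp (-η * ℓ T (ypred T (i T)))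
        ≤ β (T - 1) (i T) * Real.exp (-η * ℓ T (ypred T (i T))) :=
          mul_le_mul_of_nonneg_right h1 (Real.exp_nonneg _)
      _ ≤ ∑ j, β (T - 1) j * Real.exp (-η * ℓ T (ypred T j)) :=
          Finset.single_le_sum
            (f := fun j => β (T - 1) j * Real.exp (-η * ℓ T (ypred T j)))
            (fun j _ => le_of_lt (by have := hβpos (T - 1) j; positivity))
            (Finset.mem_univ (i T))
  -- split the product
  have hprodsplit : ∏ s ∈ Finset.Icc 1 (T - 1), (c s * Real.exp (-η * ℓ s (ypred s (i s))))
      = (∏ s ∈ Finset.Icc 1 (T - 1), c s)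
        * Real.exp (-η * ∑ s ∈ Finset.Icc 1 (T - 1), ℓ s (ypred s (i s))) := by
    rw [Finset.prod_mul_distrib]
    congr 1
    rw [← Real.exp_sum, Finset.mul_sum]
  set P : ℝ := ∏ s ∈ Finset.Icc 1 (T - 1), c s with hP
  have hPpos : 0 < P :=
    Finset.prod_pos fun s hs => hcpos s (Finset.mem_Icc.1 hs).1
  have hSsplit : (∑ s ∈ Finset.Icc 1 (T - 1), ℓ s (ypred s (i s))) + ℓ T (ypred T (i T))
      = ∑ s ∈ Finset.Icc 1 T, ℓ s (ypred s (i s)) := by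
    have hT1 : T - 1 + 1 = T := by omega
    rw [← hT1, Finset.sum_Icc_succ_top (by omega : 1 ≤ T - 1 + 1), hT1]
  set S : ℝ := ∑ s ∈ Finset.Icc 1 T, ℓ s (ypred s (i s)) with hS
  -- main inequality in exponential form
  have hmain : (1 / (m : ℝ)) * P * Real.exp (-η * S) ≤ Real.exp (-η * L T) := by
    have h1 : (1 / (m : ℝ)) * P * Real.exp (-η * S) ≤ W T := by
      have := hWT
      rw [hprodsplit] at this
      calc (1 / (m : ℝ)) * P * Real.exp (-η * S)
          = (1 / (m : ℝ)) * (P * Real.exp (-η * ∑ s ∈ Finset.Icc 1 (T - 1), ℓ s (ypred s (i s))))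
            * Real.exp (-η * ℓ T (ypred T (i T))) := by
            rw [← hSsplit, mul_add, Real.exp_add]
            ring
        _ ≤ W T := this
    calc (1 / (m : ℝ)) * P * Real.exp (-η * S) ≤ W T := h1
      _ ≤ Real.exp (-η * L T) := by rw [hL T]; exact hupper T
  -- take logarithms
  have hlog : Real.log (1 / (m : ℝ)) + Real.log P + (-η * S) ≤ -η * L T := by
    have hpos : 0 < (1 / (m : ℝ)) * P * Real.exp (-η * S) := by positivity
    have := Real.log_le_log hpos hmain
    rw [Real.log_exp] at this
    rw [Real.log_mul (by positivity) (Real.exp_ne_zero _), Real.log_mul (by positivity)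
      (ne_of_gt hPpos), Real.log_exp] at this
    linarith
  -- compute log P
  have hlogP : Real.log P = -(Tset.card * Real.log ((m : ℝ) - 1)
      + (∑ t ∈ Tset, Real.log (1 / α t))
      + ∑ t ∈ Finset.Icc 1 (T - 1) \ Tset, Real.log (1 / (1 - α t))) := by
    rw [hP, Real.log_prod (fun s hs => ne_of_gt (hcpos s (Finset.mem_Icc.1 hs).1))]
    have hsplit : Finset.Icc 1 (T - 1) \ Tset
        = (Finset.Icc 1 (T - 1)).filter (fun t => ¬ (i t ≠ i (t + 1))) := by
      rw [hTset]
      ext s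
      simp only [Finset.mem_sdiff, Finset.mem_filter, not_and, not_not]
      tauto
    have hdecomp : ∑ s ∈ Finset.Icc 1 (T - 1), Real.log (c s)
        = (∑ s ∈ Tset, Real.log (c s)) + ∑ s ∈ Finset.Icc 1 (T - 1) \ Tset, Real.log (c s) := by
      rw [hsplit, hTset]
      exact (Finset.sum_filter_add_sum_filter_not _ _ _).symm
    rw [hdecomp]
    have h1 : ∑ s ∈ Tset, Real.log (c s)
        = -((Tset.card : ℝ) * Real.log ((m : ℝ) - 1) + ∑ t ∈ Tset, Real.log (1 / α t)) := by
      have : ∀ s ∈ Tset, Real.log (c s) = Real.log (α s) - Real.log ((m : ℝ) - 1) := by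
        intro s hs
        rw [hTset, Finset.mem_filter] at hs
        have hs1 : 1 ≤ s := (Finset.mem_Icc.1 hs.1).1
        have hcs : c s = α s / ((m : ℝ) - 1) := by simp [hc, hs.2]
        rw [hcs, Real.log_div (ne_of_gt (hα s hs1).1) hm1']
      rw [Finset.sum_congr rfl this, Finset.sum_sub_distrib, Finset.sum_const, nsmul_eq_mul]
      have : ∀ s ∈ Tset, Real.log (1 / α s) = -Real.log (α s) := by
        intro s hs
        rw [hTset, Finset.mem_filter] at hs
        rw [one_div, Real.log_inv]
      rw [Finset.sum_congr rfl this, Finset.sum_neg_distrib]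
      ring
    have h2 : ∑ s ∈ Finset.Icc 1 (T - 1) \ Tset, Real.log (c s)
        = -∑ t ∈ Finset.Icc 1 (T - 1) \ Tset, Real.log (1 / (1 - α t)) := by
      have : ∀ s ∈ Finset.Icc 1 (T - 1) \ Tset, Real.log (c s) = -Real.log (1 / (1 - α s)) := by
        intro s hs
        rw [hsplit, Finset.mem_filter, not_not] at hs
        have hcs : c s = 1 - α s := by simp [hc, hs.2]
        rw [hcs, one_div, Real.log_inv, neg_neg]
      rw [Finset.sum_congr rfl this, Finset.sum_neg_distrib]
    rw [h1, h2]
    ring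
  -- finish
  have hlogm : Real.log (1 / (m : ℝ)) = -Real.log m := by rw [one_div, Real.log_inv]
  rw [hlogm, hlogP] at hlog
  set C : ℝ := Real.log m + Tset.card * Real.log ((m : ℝ) - 1)
      + (∑ t ∈ Tset, Real.log (1 / α t))
      + ∑ t ∈ Finset.Icc 1 (T - 1) \ Tset, Real.log (1 / (1 - α t)) with hC
  have hCeq : η * (S + (1 / η) * C) = η * S + C := by
    field_simp
  have hstep2 : η * L T ≤ η * (S + (1 / η) * C) := by
    rw [hCeq, hC]
    linarith
  exact le_of_mul_le_mul_left hstep2 hη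
end

section
/- For binary Switching (m = 2) with switching rate α_t = 1/(t+1), η-exp-concave losses, and any binary switching sequence i₁…i_T with n switches, for T ≥ 2 the Switching algorithm's total loss satisfies L_T^SW ≤ ∑_{t=1}^T ℓ_t(y_t^{i_t}) + (1/η)·[1 + (n+1)·log T], i.e. the regret with respect to any binary switching sequence with n switches is at most (1/η)(1 + (n+1) log T). -/
/-- Binary Switching regret bound: with `m = 2` experts, switching rate
`α_t = 1/(t+1)` and `η`-exp-concave losses, any binary switching sequence with `n`
switches has regret at most `(1/η)(1 + (n+1) log T)`. -/
theorem binary_switching_regret_bound (d : ℕ) (η : ℝ) (hη : 0 < η)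
    (Y : Set (Fin d → ℝ)) (hY : Convex ℝ Y)
    (ℓ : ℕ → (Fin d → ℝ) → ℝ)
    (hℓ : ∀ t, 1 ≤ t → ConcaveOn ℝ Y fun z => Real.exp (-η * ℓ t z))
    (ypred : ℕ → Fin 2 → (Fin d → ℝ)) (hypred : ∀ t j, ypred t j ∈ Y)
    (α : ℕ → ℝ) (hαdef : ∀ t, α t = 1 / ((t : ℝ) + 1))
    (β : ℕ → Fin 2 → ℝ) (hβ0 : ∀ j, β 0 j = 1 / 2)
    (hβ : ∀ t, 1 ≤ t → ∀ j, β t j =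
      (1 - α t) * β (t - 1) j * Real.exp (-η * ℓ t (ypred t j))
        + α t * ∑ u ∈ Finset.univ.erase j, β (t - 1) u * Real.exp (-η * ℓ t (ypred t u)))
    (y : ℕ → (Fin d → ℝ))
    (hy : ∀ t, 1 ≤ t → y t = (∑ j, β (t - 1) j)⁻¹ • ∑ j, β (t - 1) j • ypred t j)
    (L : ℕ → ℝ) (hL : ∀ t, L t = ∑ s ∈ Finset.Icc 1 t, ℓ s (y s))
    (T : ℕ) (hT : 2 ≤ T) (i : ℕ → Fin 2) (n : ℕ)
    (hn : n = ((Finset.Icc 1 (T - 1)).filter fun t => i t ≠ i (t + 1)).card) :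
    L T ≤ (∑ t ∈ Finset.Icc 1 T, ℓ t (ypred t (i t))) +
      (1 / η) * (1 + ((n : ℝ) + 1) * Real.log T) := by
  -- write T = T' + 1
  obtain ⟨T', rfl⟩ : ∃ T', T = T' + 1 := ⟨T - 1, by omega⟩
  have hT' : 1 ≤ T' := by omega
  simp only [Nat.add_sub_cancel] at hn
  -- basic facts about α
  have hα_pos : ∀ t : ℕ, 0 < α t := by
    intro t; rw [hαdef]; positivity
  have hα_le1 : ∀ t : ℕ, α t ≤ 1 := by
    intro t; rw [hαdef, div_le_one (by positivity)]
    have : (0:ℝ) ≤ (t:ℝ) := Nat.cast_nonneg t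
    linarith
  have hα_lt1 : ∀ t : ℕ, 1 ≤ t → α t < 1 := by
    intro t ht; rw [hαdef, div_lt_one (by positivity)]
    have : (1:ℝ) ≤ (t:ℝ) := by exact_mod_cast ht
    linarith
  -- β is nonnegative
  have hβnn : ∀ t j, 0 ≤ β t j := by
    intro t
    induction t with
    | zero => intro j; rw [hβ0]; norm_num
    | succ t ih =>
      intro j
      rw [hβ (t+1) (by omega), Nat.add_sub_cancel]
      have h1 : 0 ≤ 1 - α (t+1) := by linarith [hα_le1 (t+1)]
      exact add_nonneg
        (mul_nonneg (mul_nonneg h1 (ih j)) (Real.exp_pos _).le)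
        (mul_nonneg (hα_pos (t+1)).le
          (Finset.sum_nonneg fun u _ => mul_nonneg (ih u) (Real.exp_pos _).le))
  -- erase in Fin 2
  have herase : ∀ (j u : Fin 2), u ≠ j → Finset.univ.erase j = {u} := by decide
  -- total weight recursion
  have hW : ∀ t, 1 ≤ t →
      ∑ j, β t j = ∑ j, β (t-1) j * Real.exp (-η * ℓ t (ypred t j)) := by
    intro t ht
    rw [Fin.sum_univ_two, Fin.sum_univ_two, hβ t ht 0, hβ t ht 1,
      herase 0 1 (by decide), herase 1 0 (by decide),
      Finset.sum_singleton, Finset.sum_singleton]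
    ring
  -- total weight positive
  have hWpos : ∀ t, 0 < ∑ j, β t j := by
    intro t
    induction t with
    | zero => rw [Fin.sum_univ_two, hβ0, hβ0]; norm_num
    | succ t ih =>
      rw [hW (t+1) (by omega), Nat.add_sub_cancel, Fin.sum_univ_two]
      rw [Fin.sum_univ_two] at ih
      rcases lt_or_ge 0 (β t 0) with h0 | h0
      · have h2 := mul_pos h0 (Real.exp_pos (-η * ℓ (t+1) (ypred (t+1) 0)))
        have h3 := mul_nonneg (hβnn t 1) (Real.exp_pos (-η * ℓ (t+1) (ypred (t+1) 1))).le
        linarith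
      · have hb0 : β t 0 = 0 := le_antisymm h0 (hβnn t 0)
        have hb1 : 0 < β t 1 := by linarith
        have h2 := mul_pos hb1 (Real.exp_pos (-η * ℓ (t+1) (ypred (t+1) 1)))
        have h3 := mul_nonneg (hβnn t 0) (Real.exp_pos (-η * ℓ (t+1) (ypred (t+1) 0))).le
        linarith
  -- Jensen step: one-step weight decrease
  have hA : ∀ t, 1 ≤ t →
      ∑ j, β t j ≤ (∑ j, β (t-1) j) * Real.exp (-η * ℓ t (y t)) := by
    intro t ht
    have hW'pos : 0 < ∑ j, β (t-1) j := hWpos (t-1)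
    set W' : ℝ := ∑ j, β (t-1) j with hW'def
    have hwsum : ∑ j, β (t-1) j / W' = 1 := by
      rw [← Finset.sum_div, ← hW'def, div_self hW'pos.ne']
    have hjensen := (hℓ t ht).le_map_sum (t := Finset.univ)
      (w := fun j => β (t-1) j / W') (p := fun j => ypred t j)
      (fun j _ => div_nonneg (hβnn _ j) hW'pos.le) hwsum (fun j _ => hypred t j)
    have hyt : y t = ∑ j, (β (t-1) j / W') • ypred t j := by
      rw [hy t ht, Finset.smul_sum]
      refine Finset.sum_congr rfl fun j _ => ?_
      rw [smul_smul, div_eq_inv_mul]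
    rw [← hyt] at hjensen
    simp only [smul_eq_mul] at hjensen
    rw [hW t ht]
    calc ∑ j, β (t-1) j * Real.exp (-η * ℓ t (ypred t j))
        = W' * ∑ j, (β (t-1) j / W') * Real.exp (-η * ℓ t (ypred t j)) := by
          rw [Finset.mul_sum]
          refine Finset.sum_congr rfl fun j _ => ?_
          field_simp
      _ ≤ W' * Real.exp (-η * ℓ t (y t)) :=
          mul_le_mul_of_nonneg_left hjensen hW'pos.le
  -- chained bound:  W_t ≤ exp(-η L_t)
  have hchain : ∀ t, ∑ j, β t j ≤ Real.exp (-η * L t) := by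
    intro t
    induction t with
    | zero =>
      rw [Fin.sum_univ_two, hβ0, hβ0, hL 0, Finset.Icc_eq_empty (by omega),
        Finset.sum_empty]
      norm_num
    | succ t ih =>
      have hLt : L (t+1) = L t + ℓ (t+1) (y (t+1)) := by
        rw [hL (t+1), hL t, Finset.sum_Icc_succ_top (by omega)]
      have h1 := hA (t+1) (by omega)
      rw [Nat.add_sub_cancel] at h1
      calc ∑ j, β (t+1) j
          ≤ (∑ j, β t j) * Real.exp (-η * ℓ (t+1) (y (t+1))) := h1
        _ ≤ Real.exp (-η * L t) * Real.exp (-η * ℓ (t+1) (y (t+1))) :=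
            mul_le_mul_of_nonneg_right ih (Real.exp_pos _).le
        _ = Real.exp (-η * L (t+1)) := by
            rw [← Real.exp_add, hLt]; ring_nf
  -- path quantities
  set M : ℕ → ℝ := fun s => if i s = i (s+1) then 1 - α s else α s with hM
  set Sq : ℕ → ℝ := fun t => ∑ s ∈ Finset.Icc 1 t, ℓ s (ypred s (i s)) with hSq
  set P : ℕ → ℝ := fun t => ∏ s ∈ Finset.Icc 1 t, M s with hP
  -- lower bound on the path weight
  have hB : ∀ t, (1/2 : ℝ) * Real.exp (-η * Sq t) * P t ≤ β t (i (t+1)) := by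
    intro t
    induction t with
    | zero =>
      have h1 : Sq 0 = 0 := by
        simp only [hSq]; rw [Finset.Icc_eq_empty (by omega), Finset.sum_empty]
      have h2 : P 0 = 1 := by
        simp only [hP]; rw [Finset.Icc_eq_empty (by omega), Finset.prod_empty]
      rw [h1, h2, hβ0]; norm_num
    | succ t ih =>
      have hSstep : Sq (t+1) = Sq t + ℓ (t+1) (ypred (t+1) (i (t+1))) := by
        simp only [hSq]; rw [Finset.sum_Icc_succ_top (by omega)]
      have hPstep : P (t+1) = P t * M (t+1) := by
        simp only [hP]; rw [Finset.prod_Icc_succ_top (by omega)]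
      have hEpos := Real.exp_pos (-η * ℓ (t+1) (ypred (t+1) (i (t+1))))
      have h1α : 0 ≤ 1 - α (t+1) := by linarith [hα_le1 (t+1)]
      rw [hβ (t+1) (by omega) (i (t+2)), Nat.add_sub_cancel]
      by_cases hc : i (t+1) = i (t+2)
      · have hM1 : M (t+1) = 1 - α (t+1) := by simp only [hM]; rw [if_pos hc]
        have hterm2 : 0 ≤ α (t+1) * ∑ u ∈ Finset.univ.erase (i (t+2)),
            β t u * Real.exp (-η * ℓ (t+1) (ypred (t+1) u)) :=
          mul_nonneg (hα_pos (t+1)).le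
            (Finset.sum_nonneg fun u _ => mul_nonneg (hβnn t u) (Real.exp_pos _).le)
        have key : (1/2 : ℝ) * Real.exp (-η * Sq (t+1)) * P (t+1)
            ≤ (1 - α (t+1)) * β t (i (t+2)) *
              Real.exp (-η * ℓ (t+1) (ypred (t+1) (i (t+2)))) := by
          rw [← hc, hSstep, hPstep, hM1]
          have heq : (1/2 : ℝ) * Real.exp (-η * (Sq t + ℓ (t+1) (ypred (t+1) (i (t+1))))) *
              (P t * (1 - α (t+1)))
              = ((1/2 : ℝ) * Real.exp (-η * Sq t) * P t) *
                ((1 - α (t+1)) * Real.exp (-η * ℓ (t+1) (ypred (t+1) (i (t+1))))) := by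
            rw [show -η * (Sq t + ℓ (t+1) (ypred (t+1) (i (t+1))))
                = -η * Sq t + -η * ℓ (t+1) (ypred (t+1) (i (t+1))) by ring, Real.exp_add]
            ring
          rw [heq]
          calc ((1/2 : ℝ) * Real.exp (-η * Sq t) * P t) *
                ((1 - α (t+1)) * Real.exp (-η * ℓ (t+1) (ypred (t+1) (i (t+1)))))
              ≤ β t (i (t+1)) *
                ((1 - α (t+1)) * Real.exp (-η * ℓ (t+1) (ypred (t+1) (i (t+1))))) :=
                mul_le_mul_of_nonneg_right ih (mul_nonneg h1α hEpos.le)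
            _ = (1 - α (t+1)) * β t (i (t+1)) *
                Real.exp (-η * ℓ (t+1) (ypred (t+1) (i (t+1)))) := by ring
        linarith
      · have hM1 : M (t+1) = α (t+1) := by simp only [hM]; rw [if_neg hc]
        rw [herase (i (t+2)) (i (t+1)) hc, Finset.sum_singleton]
        have hterm1 : 0 ≤ (1 - α (t+1)) * β t (i (t+2)) *
            Real.exp (-η * ℓ (t+1) (ypred (t+1) (i (t+2)))) :=
          mul_nonneg (mul_nonneg h1α (hβnn t _)) (Real.exp_pos _).le
        have key : (1/2 : ℝ) * Real.exp (-η * Sq (t+1)) * P (t+1)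
            ≤ α (t+1) * (β t (i (t+1)) *
              Real.exp (-η * ℓ (t+1) (ypred (t+1) (i (t+1))))) := by
          rw [hSstep, hPstep, hM1]
          have heq : (1/2 : ℝ) * Real.exp (-η * (Sq t + ℓ (t+1) (ypred (t+1) (i (t+1))))) *
              (P t * α (t+1))
              = ((1/2 : ℝ) * Real.exp (-η * Sq t) * P t) *
                (α (t+1) * Real.exp (-η * ℓ (t+1) (ypred (t+1) (i (t+1))))) := by
            rw [show -η * (Sq t + ℓ (t+1) (ypred (t+1) (i (t+1))))
                = -η * Sq t + -η * ℓ (t+1) (ypred (t+1) (i (t+1))) by ring, Real.exp_add]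
            ring
          rw [heq]
          calc ((1/2 : ℝ) * Real.exp (-η * Sq t) * P t) *
                (α (t+1) * Real.exp (-η * ℓ (t+1) (ypred (t+1) (i (t+1)))))
              ≤ β t (i (t+1)) *
                (α (t+1) * Real.exp (-η * ℓ (t+1) (ypred (t+1) (i (t+1))))) :=
                mul_le_mul_of_nonneg_right ih
                  (mul_nonneg (hα_pos (t+1)).le hEpos.le)
            _ = α (t+1) * (β t (i (t+1)) *
                Real.exp (-η * ℓ (t+1) (ypred (t+1) (i (t+1))))) := by ring
        linarith
  -- final weight lower bound
  have hfinal1 : β T' (i (T'+1)) * Real.exp (-η * ℓ (T'+1) (ypred (T'+1) (i (T'+1))))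
      ≤ ∑ j, β (T'+1) j := by
    rw [hW (T'+1) (by omega), Nat.add_sub_cancel]
    exact Finset.single_le_sum
      (f := fun j => β T' j * Real.exp (-η * ℓ (T'+1) (ypred (T'+1) j)))
      (fun j _ => mul_nonneg (hβnn _ j) (Real.exp_pos _).le) (Finset.mem_univ (i (T'+1)))
  have hST : Sq (T'+1) = Sq T' + ℓ (T'+1) (ypred (T'+1) (i (T'+1))) := by
    simp only [hSq]; rw [Finset.sum_Icc_succ_top (by omega)]
  have hmain : (1/2 : ℝ) * Real.exp (-η * Sq (T'+1)) * P T' ≤ Real.exp (-η * L (T'+1)) := by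
    calc (1/2 : ℝ) * Real.exp (-η * Sq (T'+1)) * P T'
        = ((1/2 : ℝ) * Real.exp (-η * Sq T') * P T') *
            Real.exp (-η * ℓ (T'+1) (ypred (T'+1) (i (T'+1)))) := by
          rw [hST, show -η * (Sq T' + ℓ (T'+1) (ypred (T'+1) (i (T'+1))))
              = -η * Sq T' + -η * ℓ (T'+1) (ypred (T'+1) (i (T'+1))) by ring, Real.exp_add]
          ring
      _ ≤ β T' (i (T'+1)) * Real.exp (-η * ℓ (T'+1) (ypred (T'+1) (i (T'+1)))) :=
          mul_le_mul_of_nonneg_right (hB T') (Real.exp_pos _).le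
      _ ≤ ∑ j, β (T'+1) j := hfinal1
      _ ≤ Real.exp (-η * L (T'+1)) := hchain (T'+1)
  -- positivity of M and P
  have hMpos : ∀ s, 1 ≤ s → 0 < M s := by
    intro s hs
    simp only [hM]
    split
    · linarith [hα_lt1 s hs]
    · exact hα_pos s
  have hPpos : 0 < P T' :=
    Finset.prod_pos fun s hs => hMpos s (Finset.mem_Icc.mp hs).1
  -- take logs
  have hlog : Real.log (1/2 : ℝ) + (-η * Sq (T'+1)) + Real.log (P T') ≤ -η * L (T'+1) := by
    have h := Real.log_le_log (by positivity) hmain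
    rwa [Real.log_exp, Real.log_mul (by positivity) hPpos.ne',
      Real.log_mul (by norm_num) (Real.exp_pos _).ne', Real.log_exp] at h
  have hlogP : Real.log (P T') = ∑ s ∈ Finset.Icc 1 T', Real.log (M s) := by
    simp only [hP]
    exact Real.log_prod fun s hs => (hMpos s (Finset.mem_Icc.mp hs).1).ne'
  -- telescoping sum
  have htel : ∀ N : ℕ, ∑ s ∈ Finset.Icc 1 N, (Real.log ((s:ℝ)+1) - Real.log (s:ℝ))
      = Real.log ((N:ℝ)+1) := by
    intro N
    induction N with
    | zero => simp
    | succ N ih =>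
      rw [Finset.sum_Icc_succ_top (by omega), ih]
      push_cast
      ring
  -- bound each term of -log M
  have hle : ∀ s ∈ Finset.Icc 1 T', -Real.log (M s) ≤
      (Real.log ((s:ℝ)+1) - Real.log (s:ℝ)) +
        (if i s ≠ i (s+1) then Real.log ((T':ℝ)+1) else 0) := by
    intro s hs
    obtain ⟨hs1, hs2⟩ := Finset.mem_Icc.mp hs
    have hs1' : (1:ℝ) ≤ (s:ℝ) := by exact_mod_cast hs1
    by_cases hc : i s = i (s+1)
    · have hM1 : M s = (s:ℝ) / ((s:ℝ)+1) := by
        simp only [hM]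
        rw [if_pos hc, hαdef]
        field_simp
        ring
      rw [hM1, Real.log_div (by positivity) (by positivity), if_neg (by simp [hc])]
      linarith
    · have hM1 : M s = 1 / ((s:ℝ)+1) := by
        simp only [hM]; rw [if_neg hc, hαdef]
      have hlogs : Real.log (s:ℝ) ≤ Real.log ((T':ℝ)+1) := by
        apply Real.log_le_log (by positivity)
        have : (s:ℝ) ≤ (T':ℝ) := by exact_mod_cast hs2
        linarith
      rw [hM1, one_div, Real.log_inv, if_pos hc, neg_neg]
      linarith
  -- the filtered sum equals n * log T
  have hfiltsum : ∑ s ∈ Finset.Icc 1 T', (if i s ≠ i (s+1) then Real.log ((T':ℝ)+1) else 0)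
      = (n:ℝ) * Real.log ((T':ℝ)+1) := by
    rw [← Finset.sum_filter, Finset.sum_const, hn, nsmul_eq_mul]
  have hsumbound : ∑ s ∈ Finset.Icc 1 T', (-Real.log (M s))
      ≤ Real.log ((T':ℝ)+1) + (n:ℝ) * Real.log ((T':ℝ)+1) := by
    calc ∑ s ∈ Finset.Icc 1 T', (-Real.log (M s))
        ≤ ∑ s ∈ Finset.Icc 1 T', ((Real.log ((s:ℝ)+1) - Real.log (s:ℝ)) +
            (if i s ≠ i (s+1) then Real.log ((T':ℝ)+1) else 0)) :=
          Finset.sum_le_sum hle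
      _ = (∑ s ∈ Finset.Icc 1 T', (Real.log ((s:ℝ)+1) - Real.log (s:ℝ))) +
            ∑ s ∈ Finset.Icc 1 T', (if i s ≠ i (s+1) then Real.log ((T':ℝ)+1) else 0) :=
          Finset.sum_add_distrib
      _ = Real.log ((T':ℝ)+1) + (n:ℝ) * Real.log ((T':ℝ)+1) := by
          rw [htel T', hfiltsum]
  -- log 2 ≤ 1
  have hlog2 : Real.log (1/2 : ℝ) = -Real.log 2 := by
    rw [one_div, Real.log_inv]
  have hlog2' : Real.log 2 ≤ 1 := by
    have := Real.log_le_sub_one_of_pos (by norm_num : (0:ℝ) < 2)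
    linarith
  -- put it together
  have hsum_neg : -Real.log (P T') = ∑ s ∈ Finset.Icc 1 T', (-Real.log (M s)) := by
    rw [hlogP, Finset.sum_neg_distrib]
  have hkey : η * (L (T'+1) - Sq (T'+1)) ≤ 1 + ((n:ℝ) + 1) * Real.log ((T':ℝ)+1) := by
    have h1 : η * (L (T'+1) - Sq (T'+1)) ≤ -Real.log (1/2 : ℝ) + (-Real.log (P T')) := by
      linarith
    rw [hsum_neg] at h1
    calc η * (L (T'+1) - Sq (T'+1))
        ≤ -Real.log (1/2 : ℝ) + ∑ s ∈ Finset.Icc 1 T', (-Real.log (M s)) := h1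
      _ ≤ Real.log 2 + (Real.log ((T':ℝ)+1) + (n:ℝ) * Real.log ((T':ℝ)+1)) := by
          rw [hlog2]; linarith
      _ ≤ 1 + ((n:ℝ) + 1) * Real.log ((T':ℝ)+1) := by linarith [hlog2']
  -- conclude
  have hcast : ((T' + 1 : ℕ) : ℝ) = (T':ℝ) + 1 := by push_cast; ring
  have hgoal : L (T'+1) - Sq (T'+1) ≤ (1/η) * (1 + ((n:ℝ) + 1) * Real.log ((T':ℝ)+1)) := by
    rw [one_div_mul_eq_div]
    rw [le_div_iff₀ hη]
    linarith
  have hSqgoal : Sq (T'+1) = ∑ t ∈ Finset.Icc 1 (T'+1), ℓ t (ypred t (i t)) := rfl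
  rw [hcast]
  linarith [hgoal]
end

section
/- Structure loss lemma: Let H be a hierarchical partition of X and suppose that for every divisible segment S ∈ H we have the inequality L(S) ≤ ∑_{S' divides S} L(S') + r(S), where L : H → ℝ assigns a loss to each segment and r : H → ℝ assigns a regret term. Then for every partition P of X with P ⊆ H, L(X) ≤ ∑_{S ∈ P} L(S) + ∑_{S ∈ H : S ⊃ S' for some S' ∈ P} r(S). -/
lemma IHP_mem_self {α : Type*} {H : Set (Set α)} {X : Set α}
    (h : IsHierarchicalPartition H X) : X ∈ H := by
  cases h with
  | base => simp
  | node => simp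

lemma IHP_nonempty_subset {α : Type*} {H : Set (Set α)} {X : Set α}
    (h : IsHierarchicalPartition H X) : ∀ S ∈ H, S.Nonempty ∧ S ⊆ X := by
  induction h with
  | base X hX =>
    intro S hS
    rw [Set.mem_singleton_iff] at hS
    subst hS
    exact ⟨hX, subset_rfl⟩
  | node X n hn parts Hs hne hdisj hunion hrec ih =>
    intro S hS
    rcases hS with hS | hS
    · obtain ⟨i, hi⟩ := Set.mem_iUnion.mp hS
      obtain ⟨h1, h2⟩ := ih i S hi
      exact ⟨h1, h2.trans (hunion ▸ Set.subset_iUnion parts i)⟩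
    · rw [Set.mem_singleton_iff] at hS
      subst hS
      have hp : parts ⟨0, by omega⟩ ⊆ S := hunion ▸ Set.subset_iUnion parts _
      exact ⟨(hne _).mono hp, subset_rfl⟩

lemma IHP_finite {α : Type*} {H : Set (Set α)} {X : Set α}
    (h : IsHierarchicalPartition H X) : H.Finite := by
  induction h with
  | base => exact Set.finite_singleton _
  | node X n hn parts Hs _ _ _ _ ih =>
    exact (Set.finite_iUnion ih).union (Set.finite_singleton _)

lemma hpf_structure_loss_aux {α : Type*} (L r : Set α → ℝ) :
    ∀ {H : Set (Set α)} {X : Set α}, IsHierarchicalPartition H X →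
    (∀ S ∈ H, Divisible H S →
      L S ≤ (∑ᶠ S' ∈ {S' | Divides H S' S}, L S') + r S) →
    ∀ P : Set (Set α), P ⊆ H → IsPartition P X →
    L X ≤ (∑ᶠ S ∈ P, L S) + ∑ᶠ S ∈ {S | S ∈ H ∧ ∃ S' ∈ P, S' ⊂ S}, r S := by
  intro H X hH
  induction hH with
  | base X hX =>
    intro hrec P hPH hpart
    have hPX : P = {X} := by
      refine subset_antisymm hPH ?_
      intro S hS
      rw [Set.mem_singleton_iff] at hS
      subst hS
      obtain ⟨x, hx⟩ := hX
      rw [← hpart.2.2] at hx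
      obtain ⟨T, hT, hxT⟩ := hx
      have := hPH hT
      rw [Set.mem_singleton_iff] at this
      subst this
      exact hT
    subst hPX
    have hreg : {S | S ∈ ({X} : Set (Set α)) ∧ ∃ S' ∈ ({X} : Set (Set α)), S' ⊂ S} = ∅ := by
      ext S
      simp only [Set.mem_setOf_eq, Set.mem_singleton_iff, Set.mem_empty_iff_false, iff_false]
      rintro ⟨rfl, S', rfl, hlt⟩
      exact hlt.ne rfl
    rw [hreg, finsum_mem_empty, finsum_mem_singleton]
    simp
  | node X n hn parts Hs hne hdisj hunion hrecH ih =>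
    intro hrec P hPH hpart
    set Hbig : Set (Set α) := (⋃ i, Hs i) ∪ {X} with hHbigdef
    have hsub : ∀ i, ∀ S ∈ Hs i, S.Nonempty ∧ S ⊆ parts i :=
      fun i => IHP_nonempty_subset (hrecH i)
    have hpX : ∀ i, parts i ⊆ X := fun i => hunion ▸ Set.subset_iUnion parts i
    have huniq : ∀ {i j : Fin n} {S : Set α}, S ∈ Hs i → S ∈ Hs j → i = j := by
      intro i j S hi hj
      by_contra hij
      obtain ⟨x, hx⟩ := (hsub i S hi).1
      exact Set.disjoint_left.mp (hdisj i j hij) ((hsub i S hi).2 hx) ((hsub j S hj).2 hx)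
    haveI : Nontrivial (Fin n) := by
      refine ⟨⟨0, by omega⟩, ⟨1, by omega⟩, ?_⟩
      simp [Fin.ext_iff]
    have hplt : ∀ i, parts i ⊂ X := by
      intro i
      refine ⟨hpX i, fun hXp => ?_⟩
      obtain ⟨j, hj⟩ := exists_ne i
      obtain ⟨x, hx⟩ := hne j
      exact Set.disjoint_left.mp (hdisj j i hj) hx (hXp (hpX j hx))
    have hXnot : ∀ i, X ∉ Hs i := by
      intro i hX
      exact (hplt i).ne (subset_antisymm (hplt i).1 (hsub i X hX).2)
    have hsubBig : ∀ S ∈ Hbig, S ⊆ X := by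
      intro S hS
      rcases hS with hS | hS
      · obtain ⟨i, hi⟩ := Set.mem_iUnion.mp hS
        exact (hsub i S hi).2.trans (hpX i)
      · rw [Set.mem_singleton_iff] at hS; subst hS; exact subset_rfl
    have memHs : ∀ S ∈ Hbig, S ≠ X → ∃ i, S ∈ Hs i := by
      intro S hS hSX
      rcases hS with hS | hS
      · exact Set.mem_iUnion.mp hS
      · rw [Set.mem_singleton_iff] at hS; exact absurd hS hSX
    by_cases hXP : X ∈ P
    · -- P = {X}
      have hPX : P = {X} := by
        refine Set.eq_singleton_iff_unique_mem.mpr ⟨hXP, ?_⟩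
        intro S hS
        by_contra hSX
        have hd := hpart.2.1 hS hXP hSX
        obtain ⟨x, hx⟩ := hpart.1 S hS
        have hxX : x ∈ X := hpart.2.2 ▸ Set.mem_sUnion.mpr ⟨S, hS, hx⟩
        exact Set.disjoint_left.mp hd hx hxX
      subst hPX
      have hreg : {S | S ∈ Hbig ∧ ∃ S' ∈ ({X} : Set (Set α)), S' ⊂ S} = ∅ := by
        ext S
        simp only [Set.mem_setOf_eq, Set.mem_singleton_iff, Set.mem_empty_iff_false, iff_false]
        rintro ⟨hSH, S', rfl, hlt⟩
        exact hlt.not_subset (hsubBig S hSH)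
      rw [hreg, finsum_mem_empty, finsum_mem_singleton]
      simp
    · -- X ∉ P
      have hPi : ∀ S ∈ P, ∃ i, S ∈ Hs i := by
        intro S hS
        exact memHs S (hPH hS) (fun h => hXP (h ▸ hS))
      set Pi : Fin n → Set (Set α) := fun i => P ∩ Hs i with hPidef
      have hPiPart : ∀ i, IsPartition (Pi i) (parts i) := by
        intro i
        refine ⟨fun S hS => hpart.1 S hS.1, hpart.2.1.subset Set.inter_subset_left, ?_⟩
        apply subset_antisymm
        · exact Set.sUnion_subset fun S hS => (hsub i S hS.2).2
        · intro x hx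
          have hxX : x ∈ ⋃₀ P := hpart.2.2 ▸ hpX i hx
          obtain ⟨S, hS, hxS⟩ := hxX
          obtain ⟨j, hj⟩ := hPi S hS
          have hji : j = i := by
            by_contra hji
            exact Set.disjoint_left.mp (hdisj j i hji) ((hsub j S hj).2 hxS) hx
          exact Set.mem_sUnion.mpr ⟨S, ⟨hS, hji ▸ hj⟩, hxS⟩
      -- Divides transfer
      have hDiv : ∀ i, ∀ S ∈ Hs i, ∀ S', Divides (Hs i) S' S ↔ Divides Hbig S' S := by
        intro i S hS S'
        constructor
        · rintro ⟨hS'i, -, hlt, hnb⟩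
          refine ⟨Or.inl (Set.mem_iUnion.mpr ⟨i, hS'i⟩), Or.inl (Set.mem_iUnion.mpr ⟨i, hS⟩),
            hlt, ?_⟩
          rintro ⟨T, hT, h1, h2⟩
          have hTne : T ≠ X := by
            rintro rfl
            exact (hplt i).not_subset (h2.subset.trans (hsub i S hS).2)
          obtain ⟨j, hj⟩ := memHs T hT hTne
          obtain ⟨x, hx⟩ := (hsub i S' hS'i).1
          have hxT : x ∈ T := h1.subset hx
          have hji : j = i := by
            by_contra hji
            exact Set.disjoint_left.mp (hdisj j i hji) ((hsub j T hj).2 hxT)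
              ((hsub i S hS).2 (h2.subset hxT))
          exact hnb ⟨T, hji ▸ hj, h1, h2⟩
        · rintro ⟨hS'b, -, hlt, hnb⟩
          have hS'ne : S' ≠ X := by
            rintro rfl
            exact (hplt i).not_subset (hlt.subset.trans (hsub i S hS).2)
          obtain ⟨j, hj⟩ := memHs S' hS'b hS'ne
          obtain ⟨x, hx⟩ := (hsub j S' hj).1
          have hji : j = i := by
            by_contra hji
            exact Set.disjoint_left.mp (hdisj j i hji) ((hsub j S' hj).2 hx)
              ((hsub i S hS).2 (hlt.subset hx))
          refine ⟨hji ▸ hj, hS, hlt, ?_⟩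
          rintro ⟨T, hT, h1, h2⟩
          exact hnb ⟨T, Or.inl (Set.mem_iUnion.mpr ⟨i, hT⟩), h1, h2⟩
      -- restricted recursion hypothesis
      have hrecI : ∀ i, ∀ S ∈ Hs i, Divisible (Hs i) S →
          L S ≤ (∑ᶠ S' ∈ {S' | Divides (Hs i) S' S}, L S') + r S := by
        intro i S hS hdivi
        have hsetEq : {S' | Divides (Hs i) S' S} = {S' | Divides Hbig S' S} :=
          Set.ext fun S' => hDiv i S hS S'
        rw [hsetEq]
        obtain ⟨S', hS'⟩ := hdivi.2
        exact hrec S (Or.inl (Set.mem_iUnion.mpr ⟨i, hS⟩))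
          ⟨Or.inl (Set.mem_iUnion.mpr ⟨i, hS⟩), S', (hDiv i S hS S').mp hS'⟩
      have hIH : ∀ i, L (parts i) ≤ (∑ᶠ S ∈ Pi i, L S) +
          ∑ᶠ S ∈ {S | S ∈ Hs i ∧ ∃ S' ∈ Pi i, S' ⊂ S}, r S :=
        fun i => ih i (hrecI i) (Pi i) Set.inter_subset_right (hPiPart i)
      -- top level
      have hinj : Function.Injective parts := by
        intro i j hij
        by_contra hne'
        obtain ⟨x, hx⟩ := hne i
        exact Set.disjoint_left.mp (hdisj i j hne') hx (hij ▸ hx)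
      have hDivX : {S' | Divides Hbig S' X} = Set.range parts := by
        ext S'
        constructor
        · rintro ⟨hS'H, -, hlt, hnb⟩
          obtain ⟨i, hi⟩ := memHs S' hS'H hlt.ne
          refine ⟨i, ?_⟩
          by_contra hne'
          exact hnb ⟨parts i, Or.inl (Set.mem_iUnion.mpr ⟨i, IHP_mem_self (hrecH i)⟩),
            ⟨(hsub i S' hi).2, fun h => hne' (subset_antisymm h (hsub i S' hi).2)⟩, hplt i⟩
        · rintro ⟨i, rfl⟩
          refine ⟨Or.inl (Set.mem_iUnion.mpr ⟨i, IHP_mem_self (hrecH i)⟩), Or.inr rfl,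
            hplt i, ?_⟩
          rintro ⟨T, hT, h1, h2⟩
          obtain ⟨j, hj⟩ := memHs T hT h2.ne
          have hji : j = i := by
            by_contra hji
            obtain ⟨x, hx⟩ := hne i
            exact Set.disjoint_left.mp (hdisj j i hji) ((hsub j T hj).2 (h1.subset hx)) hx
          exact h1.not_subset (hji ▸ (hsub j T hj).2)
      have h0 : Divides Hbig (parts ⟨0, by omega⟩) X := by
        have : parts ⟨0, by omega⟩ ∈ {S' | Divides Hbig S' X} :=
          hDivX ▸ Set.mem_range_self _
        exact this
      have htop : L X ≤ (∑ i, L (parts i)) + r X := by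
        have := hrec X (Or.inr rfl) ⟨Or.inr rfl, _, h0⟩
        rwa [hDivX, finsum_mem_range hinj, finsum_eq_sum_of_fintype] at this
      -- sums
      have hPd : Pairwise (Function.onFun Disjoint Pi) := by
        intro i j hij
        rw [Function.onFun, Set.disjoint_left]
        intro S hSi hSj
        exact hij (huniq hSi.2 hSj.2)
      have hPf : ∀ i, (Pi i).Finite :=
        fun i => (IHP_finite (hrecH i)).subset Set.inter_subset_right
      have hPU : P = ⋃ i, Pi i := by
        ext S
        constructor
        · intro hS
          obtain ⟨i, hi⟩ := hPi S hS
          exact Set.mem_iUnion.mpr ⟨i, hS, hi⟩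
        · intro hS
          obtain ⟨i, hi⟩ := Set.mem_iUnion.mp hS
          exact hi.1
      have hsumP : (∑ᶠ S ∈ P, L S) = ∑ i, ∑ᶠ S ∈ Pi i, L S := by
        rw [hPU, finsum_mem_iUnion hPd hPf, finsum_eq_sum_of_fintype]
      set Ri : Fin n → Set (Set α) := fun i => {S | S ∈ Hs i ∧ ∃ S' ∈ Pi i, S' ⊂ S} with hRidef
      have hRd : Pairwise (Function.onFun Disjoint Ri) := by
        intro i j hij
        rw [Function.onFun, Set.disjoint_left]
        intro S hSi hSj
        exact hij (huniq hSi.1 hSj.1)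
      have hRf : ∀ i, (Ri i).Finite :=
        fun i => (IHP_finite (hrecH i)).subset (fun S hS => hS.1)
      have hPne : P.Nonempty := by
        obtain ⟨x, hx⟩ := hne ⟨0, by omega⟩
        have : x ∈ ⋃₀ P := hpart.2.2 ▸ hpX _ hx
        obtain ⟨S, hS, -⟩ := this
        exact ⟨S, hS⟩
      have hRU : {S | S ∈ Hbig ∧ ∃ S' ∈ P, S' ⊂ S} = (⋃ i, Ri i) ∪ {X} := by
        ext S
        simp only [Set.mem_setOf_eq, Set.mem_union, Set.mem_iUnion, Set.mem_singleton_iff,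
          hRidef]
        constructor
        · rintro ⟨hSH, S', hS'P, hlt⟩
          by_cases hSX : S = X
          · right; exact hSX
          · left
            obtain ⟨i, hi⟩ := memHs S hSH hSX
            obtain ⟨j, hj⟩ := hPi S' hS'P
            obtain ⟨x, hx⟩ := (hsub j S' hj).1
            have hji : j = i := by
              by_contra hji
              exact Set.disjoint_left.mp (hdisj j i hji) ((hsub j S' hj).2 hx)
                ((hsub i S hi).2 (hlt.subset hx))
            exact ⟨i, hi, S', ⟨hS'P, hji ▸ hj⟩, hlt⟩
        · rintro (⟨i, hSi, S', ⟨hS'P, hS'i⟩, hlt⟩ | rfl)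
          · exact ⟨Or.inl (Set.mem_iUnion.mpr ⟨i, hSi⟩), S', hS'P, hlt⟩
          · obtain ⟨S', hS'⟩ := hPne
            obtain ⟨j, hj⟩ := hPi S' hS'
            exact ⟨Or.inr rfl, S', hS',
              ssubset_of_subset_of_ssubset (hsub j S' hj).2 (hplt j)⟩
      have hXd : Disjoint (⋃ i, Ri i) ({X} : Set (Set α)) := by
        rw [Set.disjoint_right]
        intro S hS hS'
        rw [Set.mem_singleton_iff] at hS
        subst hS
        obtain ⟨i, hi⟩ := Set.mem_iUnion.mp hS'
        exact hXnot i hi.1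
      have hsumR : (∑ᶠ S ∈ {S | S ∈ Hbig ∧ ∃ S' ∈ P, S' ⊂ S}, r S) =
          (∑ i, ∑ᶠ S ∈ Ri i, r S) + r X := by
        rw [hRU, finsum_mem_union hXd (Set.finite_iUnion hRf) (Set.finite_singleton _),
          finsum_mem_iUnion hRd hRf, finsum_eq_sum_of_fintype, finsum_mem_singleton]
      rw [hsumP, hsumR]
      have hstep : (∑ i, L (parts i)) ≤
          ∑ i, ((∑ᶠ S ∈ Pi i, L S) + ∑ᶠ S ∈ Ri i, r S) :=
        Finset.sum_le_sum fun i _ => hIH i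
      rw [Finset.sum_add_distrib] at hstep
      linarith [htop]

/-- Structure loss lemma: if at each divisible segment the loss is bounded by the sum of
the losses of its dividing segments plus a regret term, then the loss at the root is
bounded by the loss of any induced partition plus the regret of all segments strictly
containing an element of the partition. -/
theorem hpf_structure_loss {α : Type*} (H : Set (Set α)) (X : Set α)
    (hH : IsHierarchicalPartition H X) (L r : Set α → ℝ)
    (hrec : ∀ S ∈ H, Divisible H S →
      L S ≤ (∑ᶠ S' ∈ {S' | Divides H S' S}, L S') + r S)
    (P : Set (Set α)) (hPH : P ⊆ H) (hpart : IsPartition P X) :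
    L X ≤ (∑ᶠ S ∈ P, L S) + ∑ᶠ S ∈ {S | S ∈ H ∧ ∃ S' ∈ P, S' ⊂ S}, r S := by
  exact hpf_structure_loss_aux L r hH hrec P hPH hpart
end
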